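/- Let Γ ⊂ {1,…,N} and x ∈ ℝ^N be given. If an M×N real matrix Ψ satisfies the RIP of order |supp(x) ∪ Γ| with isometry constant δ, then ‖(ΨᵀΨx)|_Γ − x|_Γ‖₂ ≤ δ‖x‖₂. -/

import Mathlib

noncomputable section

namespace OMP

open Matrix Finset

/-- The support of a vector, as a `Finset`. -/
def supp {n : ℕ} (x : Fin n → ℝ) : Finset (Fin n) :=
  Finset.univ.filter fun j => x j ≠ 0

/-- The Euclidean (ℓ²) norm of a vector. -/
def l2 {n : ℕ} (x : Fin n → ℝ) : ℝ := Real.sqrt (∑ j, x j ^ 2)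

/-- The ℓ^∞ norm of a vector. -/
def linf {n : ℕ} (x : Fin n → ℝ) : ℝ := ⨆ j, |x j|

/-- The standard inner product of two vectors. -/
def dotp {n : ℕ} (x y : Fin n → ℝ) : ℝ := ∑ j, x j * y j

/-- The restriction of a vector to a set of indices (zero elsewhere). -/
def restr {n : ℕ} (Γ : Finset (Fin n)) (x : Fin n → ℝ) : Fin n → ℝ :=
  fun j => if j ∈ Γ then x j else 0

/-- The restricted isometry property of order `K` with isometry constant `δ`. -/
def RIP {M N : ℕ} (K : ℕ) (Φ : Matrix (Fin M) (Fin N) ℝ) (δ : ℝ) : Prop :=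
  0 < δ ∧ δ < 1 ∧ ∀ x : Fin N → ℝ, (supp x).card ≤ K →
    (1 - δ) * l2 x ^ 2 ≤ l2 (Φ.mulVec x) ^ 2 ∧
      l2 (Φ.mulVec x) ^ 2 ≤ (1 + δ) * l2 x ^ 2

/-- The span of the columns of `Φ` indexed by `Λ`, as a submodule of Euclidean space. -/
def colSpan {M N : ℕ} (Φ : Matrix (Fin M) (Fin N) ℝ) (Λ : Finset (Fin N)) :
    Submodule ℝ (EuclideanSpace ℝ (Fin M)) :=
  Submodule.span ℝ ((fun j => (WithLp.equiv 2 (Fin M → ℝ)).symm fun i => Φ i j) '' (Λ : Set (Fin N)))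

/-- Orthogonal projection `P_Λ` onto the span of the columns of `Φ` indexed by `Λ`. -/
def projCol {M N : ℕ} (Φ : Matrix (Fin M) (Fin N) ℝ) (Λ : Finset (Fin N))
    (v : Fin M → ℝ) : Fin M → ℝ :=
  WithLp.equiv 2 (Fin M → ℝ)
    (Submodule.orthogonalProjectionOnto (colSpan Φ Λ) ((WithLp.equiv 2 (Fin M → ℝ)).symm v) : EuclideanSpace ℝ (Fin M))

/-- The matrix `A_Λ = (I - P_Λ) Φ`: the columns of `Φ` orthogonalized against `colSpan Φ Λ`. -/
def Amat {M N : ℕ} (Φ : Matrix (Fin M) (Fin N) ℝ) (Λ : Finset (Fin N)) :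
    Matrix (Fin M) (Fin N) ℝ :=
  Matrix.of fun i j => Φ i j - projCol Φ Λ (fun i' => Φ i' j) i

/-! With `w := (ΨᵀΨx - x)|_Γ` one has `‖w‖² = ⟨w, ΨᵀΨx - x⟩ = ⟨Ψw, Ψx⟩ - ⟨w, x⟩`, and both `w` and `x`
are supported in `supp x ∪ Γ`. Polarizing the RIP on that set bounds `⟨Ψu, Ψv⟩ - ⟨u, v⟩` by
`δ ‖u‖ ‖v‖`, so `‖w‖² ≤ δ ‖w‖ ‖x‖`. -/

lemma l2_sq_eq_dotProduct {n : ℕ} (x : Fin n → ℝ) : l2 x ^ 2 = x ⬝ᵥ x := by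
  rw [l2, Real.sq_sqrt (by positivity)]
  simp only [dotProduct, sq]

lemma l2_nonneg {n : ℕ} (x : Fin n → ℝ) : 0 ≤ l2 x := Real.sqrt_nonneg _

lemma l2_eq_zero_iff {n : ℕ} {x : Fin n → ℝ} : l2 x = 0 ↔ x = 0 := by
  rw [← dotProduct_self_eq_zero, ← l2_sq_eq_dotProduct, sq_eq_zero_iff]

lemma supp_subset_iff {n : ℕ} {x : Fin n → ℝ} {S : Finset (Fin n)} :
    supp x ⊆ S ↔ ∀ j ∉ S, x j = 0 := by
  simp only [supp, subset_iff, mem_filter, mem_univ, true_and]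
  exact forall_congr' fun _ => not_imp_comm

lemma restr_dotProduct_self {n : ℕ} (Γ : Finset (Fin n)) (y : Fin n → ℝ) :
    restr Γ y ⬝ᵥ restr Γ y = restr Γ y ⬝ᵥ y := by
  refine sum_congr rfl fun j _ => ?_
  by_cases hj : j ∈ Γ <;> simp [restr, hj]

lemma supp_restr_subset {n : ℕ} (Γ : Finset (Fin n)) (y : Fin n → ℝ) : supp (restr Γ y) ⊆ Γ :=
  supp_subset_iff.2 fun _ hj => if_neg hj

namespace RIP

variable {M N K : ℕ} {Ψ : Matrix (Fin M) (Fin N) ℝ} {δ : ℝ} {S : Finset (Fin N)}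
  {u v : Fin N → ℝ}

lemma mulVec_dotProduct_sub_le_avg (h : RIP K Ψ δ) (hS : S.card ≤ K)
    (hu : ∀ j ∉ S, u j = 0) (hv : ∀ j ∉ S, v j = 0) :
    (Ψ *ᵥ u) ⬝ᵥ (Ψ *ᵥ v) - u ⬝ᵥ v ≤ δ * (u ⬝ᵥ u + v ⬝ᵥ v) / 2 := by
  have hcard : ∀ w : Fin N → ℝ, (∀ j ∉ S, w j = 0) → (supp w).card ≤ K := fun w hw =>
    (card_le_card (supp_subset_iff.2 hw)).trans hS
  have hadd := (h.2.2 (u + v) (hcard _ fun j hj => by simp [hu j hj, hv j hj])).2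
  have hsub := (h.2.2 (u - v) (hcard _ fun j hj => by simp [hu j hj, hv j hj])).1
  simp only [l2_sq_eq_dotProduct, mulVec_add, mulVec_sub, add_dotProduct, dotProduct_add,
    sub_dotProduct, dotProduct_sub, dotProduct_comm v u, dotProduct_comm (Ψ *ᵥ v) (Ψ *ᵥ u)]
    at hadd hsub
  linarith

/-- Evaluating the averaged bound at `(‖v‖ u, ‖u‖ v)` turns the arithmetic mean into the
geometric one. -/
lemma mulVec_dotProduct_sub_le (h : RIP K Ψ δ) (hS : S.card ≤ K)
    (hu : ∀ j ∉ S, u j = 0) (hv : ∀ j ∉ S, v j = 0) :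
    (Ψ *ᵥ u) ⬝ᵥ (Ψ *ᵥ v) - u ⬝ᵥ v ≤ δ * l2 u * l2 v := by
  rcases (mul_nonneg (l2_nonneg u) (l2_nonneg v)).eq_or_lt with huv | huv
  · rcases mul_eq_zero.1 huv.symm with hu0 | hv0
    · rw [hu0, l2_eq_zero_iff.1 hu0]; simp
    · rw [hv0, l2_eq_zero_iff.1 hv0]; simp
  have hscaled := h.mulVec_dotProduct_sub_le_avg hS (u := l2 v • u) (v := l2 u • v)
    (fun j hj => by simp [hu j hj]) (fun j hj => by simp [hv j hj])
  simp only [mulVec_smul, smul_dotProduct, dotProduct_smul, smul_eq_mul,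
    ← l2_sq_eq_dotProduct] at hscaled
  have : l2 u * l2 v * ((Ψ *ᵥ u) ⬝ᵥ (Ψ *ᵥ v) - u ⬝ᵥ v) ≤ l2 u * l2 v * (δ * l2 u * l2 v) := by
    linear_combination hscaled
  exact le_of_mul_le_mul_left this huv

end RIP

/-- Proposition 3.2(1) of ROMP. -/
theorem stmt10 {M N : ℕ} (Ψ : Matrix (Fin M) (Fin N) ℝ) (δ : ℝ) (Γ : Finset (Fin N))
    (x : Fin N → ℝ) (hRIP : RIP (supp x ∪ Γ).card Ψ δ) :
    l2 (restr Γ (Ψᵀ.mulVec (Ψ.mulVec x) - x)) ≤ δ * l2 x := by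
  set w := restr Γ (Ψᵀ *ᵥ (Ψ *ᵥ x) - x)
  have hw : ∀ j ∉ supp x ∪ Γ, w j = 0 :=
    supp_subset_iff.1 ((supp_restr_subset Γ _).trans subset_union_right)
  have hx : ∀ j ∉ supp x ∪ Γ, x j = 0 :=
    supp_subset_iff.1 subset_union_left
  have hkey : l2 w ^ 2 = (Ψ *ᵥ w) ⬝ᵥ (Ψ *ᵥ x) - w ⬝ᵥ x := by
    rw [l2_sq_eq_dotProduct, restr_dotProduct_self, dotProduct_sub, dotProduct_mulVec,
      vecMul_transpose]
  have hbound := hRIP.mulVec_dotProduct_sub_le le_rfl hw hx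
  nlinarith [l2_nonneg w, mul_nonneg hRIP.1.le (l2_nonneg x)]

end OMP
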